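/- For p ≥ 1 and μ, ν ∈ P_p(B^d), letting μ̃ = (P_{B→L})_#μ and ν̃ = (P_{B→L})_#ν, the horospherical hyperbolic sliced-Wasserstein discrepancies agree: ∫_{S^{d−1}} W_p^p(t^{ṽ}_# P̃^{ṽ}_# μ, t^{ṽ}_# P̃^{ṽ}_# ν) dλ(ṽ) = ∫_{S^{d−1}} W_p^p(t^v_# P̃^v_# μ̃, t^v_# P̃^v_# ν̃) dλ(ṽ), where v = (0, ṽ). -/

import Mathlib

open MeasureTheory

noncomputable def arcosh (x : ℝ) : ℝ := Real.log (x + Real.sqrt (x^2 - 1))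

noncomputable def mink (d : ℕ) (x y : Fin (d+1) → ℝ) : ℝ :=
  -(x 0 * y 0) + ∑ i : Fin d, x i.succ * y i.succ

def LorentzSet (d : ℕ) : Set (Fin (d+1) → ℝ) :=
  {x | mink d x x = -1 ∧ 0 < x 0}

noncomputable def dL (d : ℕ) (x y : Fin (d+1) → ℝ) : ℝ :=
  arcosh (-(mink d x y))

noncomputable def lorOrigin (d : ℕ) : Fin (d+1) → ℝ := fun i => if i = 0 then 1 else 0


/-- Squared Euclidean norm. -/
noncomputable def nsq (d : ℕ) (x : Fin d → ℝ) : ℝ := ∑ i, (x i)^2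

/-- The Poincaré ball. -/
def BallSet (d : ℕ) : Set (Fin d → ℝ) := {x | nsq d x < 1}

/-- Poincaré ball distance. -/
noncomputable def dB (d : ℕ) (x y : Fin d → ℝ) : ℝ :=
  arcosh (1 + 2 * nsq d (x - y) / ((1 - nsq d x) * (1 - nsq d y)))

/-- The map from the Poincaré ball to the Lorentz model. -/
noncomputable def PBL (d : ℕ) (x : Fin d → ℝ) : Fin (d+1) → ℝ :=
  Fin.cons ((1 + nsq d x) / (1 - nsq d x)) (fun i => 2 * x i / (1 - nsq d x))

/-- The map from the Lorentz model to the Poincaré ball. -/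
noncomputable def PLB (d : ℕ) (y : Fin (d+1) → ℝ) : Fin d → ℝ :=
  fun i => y i.succ / (1 + y 0)

open scoped ENNReal

/-- Signed coordinate in the Poincaré ball, relative to the ideal point `ṽ`. -/
noncomputable def tB (d : ℕ) (vt x : Fin d → ℝ) : ℝ :=
  Real.sign (∑ i, x i * vt i) * dB d x 0

/-- Signed coordinate in the Lorentz model, relative to the direction `v`. -/
noncomputable def tL (d : ℕ) (v x : Fin (d+1) → ℝ) : ℝ :=
  Real.sign (∑ i, x i * v i) * dL d x (lorOrigin d)

/-- Horospherical projection in the Poincaré ball. -/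
noncomputable def PtB (d : ℕ) (vt x : Fin d → ℝ) : Fin d → ℝ := fun i =>
  ((1 - nsq d x - nsq d (vt - x)) / (1 - nsq d x + nsq d (vt - x))) * vt i

/-- Horospherical projection in the Lorentz model. -/
noncomputable def PtL (d : ℕ) (v y : Fin (d+1) → ℝ) : Fin (d+1) → ℝ := fun i =>
  -(1 / (2 * mink d y (fun j => lorOrigin d j + v j))) *
    ((1 + (mink d y (fun j => lorOrigin d j + v j))^2) * lorOrigin d i +
      (1 - (mink d y (fun j => lorOrigin d j + v j))^2) * v i)

/-- The `p`-Wasserstein cost (to the `p`-th power) on `ℝ`. -/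
noncomputable def Wp (p : ℝ) (μ ν : MeasureTheory.Measure ℝ) : ℝ≥0∞ :=
  ⨅ (γ : MeasureTheory.Measure (ℝ × ℝ)) (_ : γ.map Prod.fst = μ)
    (_ : γ.map Prod.snd = ν),
    ∫⁻ z, ENNReal.ofReal (|z.1 - z.2| ^ p) ∂γ

/-- Ideal points: the unit sphere `S^{d−1}`. -/
def IdealPoints (d : ℕ) : Type := {v : Fin d → ℝ // nsq d v = 1}

instance (d : ℕ) : MeasurableSpace (IdealPoints d) := Subtype.instMeasurableSpace


lemma nsq_nonneg (d : ℕ) (x : Fin d → ℝ) : 0 ≤ nsq d x :=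
  Finset.sum_nonneg fun i _ => sq_nonneg _

lemma nsq_sub (d : ℕ) (x y : Fin d → ℝ) :
    nsq d (x - y) = nsq d x - 2 * (∑ i, x i * y i) + nsq d y := by
  unfold nsq
  rw [Finset.mul_sum, ← Finset.sum_sub_distrib, ← Finset.sum_add_distrib]
  exact Finset.sum_congr rfl fun i _ => by simp only [Pi.sub_apply]; ring

lemma sign_mul_pos {a k : ℝ} (hk : 0 < k) : Real.sign (k * a) = Real.sign a := by
  rcases lt_trichotomy a 0 with h | h | h
  · rw [Real.sign_of_neg h, Real.sign_of_neg (mul_neg_of_pos_of_neg hk h)]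
  · rw [h, mul_zero]
  · rw [Real.sign_of_pos h, Real.sign_of_pos (mul_pos hk h)]

lemma L1 {t : ℝ} (ht : 0 < t) :
    Real.sign ((1 - t^2) / (2*t)) * arcosh ((1 + t^2) / (2*t)) = -Real.log t := by
  have h2t : (0:ℝ) < 2*t := by linarith
  have hsq : ((1 + t^2)/(2*t))^2 - 1 = ((1 - t^2)/(2*t))^2 := by
    field_simp; ring
  have hsqrt : Real.sqrt (((1 + t^2)/(2*t))^2 - 1) = |1 - t^2| / (2*t) := by
    rw [hsq, Real.sqrt_sq_eq_abs, abs_div, abs_of_pos h2t]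
  unfold arcosh
  rw [hsqrt, ← add_div]
  rcases lt_trichotomy t 1 with h | h | h
  · have habs : |1 - t^2| = 1 - t^2 := abs_of_pos (by nlinarith)
    rw [habs, Real.sign_of_pos (div_pos (by nlinarith) h2t), one_mul]
    rw [show (1 + t^2 + (1 - t^2)) / (2*t) = t⁻¹ by field_simp; norm_num]
    exact Real.log_inv t
  · subst h; norm_num [Real.sign_zero]
  · have habs : |1 - t^2| = -(1 - t^2) := abs_of_neg (by nlinarith)
    rw [habs, Real.sign_of_neg (div_neg_of_neg_of_pos (by nlinarith) h2t)]
    rw [show (1 + t^2 + -(1 - t^2)) / (2*t) = t by field_simp; ring]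
    ring

lemma L2 {c : ℝ} (h1 : -1 < c) (h2 : c < 1) :
    Real.sign c * arcosh ((1 + c^2) / (1 - c^2)) = Real.log ((1 + c) / (1 - c)) := by
  have h1' : 0 < 1 + c := by linarith
  have h2' : 0 < 1 - c := by linarith
  set t := (1 - c) / (1 + c) with ht
  have htpos : 0 < t := div_pos h2' h1'
  have hA : (1 + c^2) / (1 - c^2) = (1 + t^2) / (2*t) := by
    rw [ht]; rw [div_eq_div_iff (by nlinarith) (by positivity)]
    field_simp; ring
  have hB : (1 - t^2) / (2*t) = (2 / ((1+c)*(1-c))) * c := by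
    rw [ht]; field_simp; ring
  have hsign : Real.sign c = Real.sign ((1 - t^2)/(2*t)) := by
    rw [hB, sign_mul_pos (by positivity)]
  rw [hA, hsign, L1 htpos, ← Real.log_inv, ht, inv_div]

lemma sum_mul_self (d : ℕ) (C : ℝ) (vt : Fin d → ℝ) :
    ∑ i, C * vt i * vt i = C * nsq d vt := by
  unfold nsq; rw [Finset.mul_sum]; exact Finset.sum_congr rfl fun i _ => by ring

lemma ball_side (d : ℕ) (vt : Fin d → ℝ) (hv : nsq d vt = 1)
    (x : Fin d → ℝ) (hx : nsq d x < 1) :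
    tB d vt (PtB d vt x) =
      Real.log ((1 - nsq d x) / (1 + nsq d x - 2 * ∑ i, x i * vt i)) := by
  set r2 := nsq d x with hr2
  set u := ∑ i, x i * vt i with hu
  have hr2nn : 0 ≤ r2 := nsq_nonneg d x
  have hcs : u^2 ≤ r2 := by
    have h := Finset.sum_mul_sq_le_sq_mul_sq Finset.univ x vt
    have h2 : u^2 ≤ nsq d x * nsq d vt := by simpa [nsq, hu] using h
    rw [hv, mul_one, ← hr2] at h2; exact h2
  have hu1 : u < 1 := by nlinarith
  have hu1' : -1 < u := by nlinarith
  have hden : 0 < 1 + r2 - 2*u := by nlinarith [sq_nonneg (1-u)]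
  have h1u : 0 < 1 - u := by linarith
  have hnsub : nsq d (vt - x) = 1 - 2*u + r2 := by
    rw [nsq_sub, hv, hr2]
    have hvx : ∑ i, vt i * x i = u := by
      rw [hu]; exact Finset.sum_congr rfl fun i _ => mul_comm _ _
    rw [hvx]
  set c := (u - r2) / (1 - u) with hc
  have hc1 : c < 1 := by rw [hc, div_lt_one h1u]; linarith
  have hc1' : -1 < c := by rw [hc, lt_div_iff₀ h1u]; linarith
  have hCeq : (1 - r2 - nsq d (vt - x)) / (1 - r2 + nsq d (vt - x)) = c := by
    rw [hnsub, hc, div_eq_div_iff (by linarith) (by linarith)]; ring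
  have hz : PtB d vt x = fun i => c * vt i := by
    funext i; unfold PtB; rw [← hr2, hCeq]
  have hsum : ∑ i, (PtB d vt x) i * vt i = c := by
    rw [hz]; simpa [hv] using sum_mul_self d c vt
  have hnz : nsq d (PtB d vt x) = c^2 := by
    rw [hz]; unfold nsq
    have : ∑ i, (c * vt i)^2 = c^2 * nsq d vt := by
      unfold nsq; rw [Finset.mul_sum]; exact Finset.sum_congr rfl fun i _ => by ring
    simpa [hv] using this
  have h0 : nsq d (0 : Fin d → ℝ) = 0 := by simp [nsq]
  have hc2 : c^2 < 1 := by nlinarith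
  have hdB : dB d (PtB d vt x) 0 = arcosh ((1 + c^2)/(1 - c^2)) := by
    unfold dB
    rw [sub_zero, hnz, h0]
    congr 1
    rw [sub_zero, mul_one]
    have hne : (1:ℝ) - c^2 ≠ 0 := by nlinarith
    field_simp
    ring
  unfold tB
  rw [hsum, hdB, L2 hc1' hc1]
  congr 1
  have h1u' : (1:ℝ) - u ≠ 0 := ne_of_gt h1u
  rw [div_eq_div_iff (by linarith : (1:ℝ) - c ≠ 0) (ne_of_gt hden), hc]
  field_simp [h1u']
  ring

lemma lorentz_side (d : ℕ) (vt : Fin d → ℝ) (hv : nsq d vt = 1)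
    (x : Fin d → ℝ) (hx : nsq d x < 1) :
    tL d (Fin.cons 0 vt) (PtL d (Fin.cons 0 vt) (PBL d x)) =
      Real.log ((1 - nsq d x) / (1 + nsq d x - 2 * ∑ i, x i * vt i)) := by
  set r2 := nsq d x with hr2
  set u := ∑ i, x i * vt i with hu
  have hr2nn : 0 ≤ r2 := nsq_nonneg d x
  have hcs : u^2 ≤ r2 := by
    have h := Finset.sum_mul_sq_le_sq_mul_sq Finset.univ x vt
    have h2 : u^2 ≤ nsq d x * nsq d vt := by simpa [nsq, hu] using h
    rw [hv, mul_one, ← hr2] at h2; exact h2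
  have hu1 : u < 1 := by nlinarith
  have hden : 0 < 1 + r2 - 2*u := by nlinarith [sq_nonneg (1-u)]
  have h1r2 : 0 < 1 - r2 := by linarith
  set m := (2*u - (1 + r2)) / (1 - r2) with hmdef
  set t := (1 + r2 - 2*u) / (1 - r2) with htdef
  have htpos : 0 < t := div_pos hden h1r2
  have hmt : m = -t := by
    rw [hmdef, htdef, ← neg_div]; congr 1; ring
  have hm : mink d (PBL d x) (fun j => lorOrigin d j + (Fin.cons (0:ℝ) vt : Fin (d+1) → ℝ) j) = m := by
    unfold mink PBL lorOrigin
    simp only [Fin.cons_zero, Fin.cons_succ, Fin.succ_ne_zero, if_neg, if_pos,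
      ite_true, ite_false, add_zero, zero_add, mul_one, if_true, reduceCtorEq,
      not_false_eq_true]
    rw [show ∑ i : Fin d, 2 * x i / (1 - nsq d x) * vt i
        = (2 / (1 - nsq d x)) * ∑ i, x i * vt i by
      rw [Finset.mul_sum]; exact Finset.sum_congr rfl fun i _ => by ring]
    rw [← hr2, ← hu, hmdef]
    field_simp
    ring
  have hw : PtL d (Fin.cons (0:ℝ) vt) (PBL d x)
      = fun i => -(1/(2*m)) * ((1+m^2) * lorOrigin d i + (1-m^2) * (Fin.cons (0:ℝ) vt : Fin (d+1) → ℝ) i) := by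
    funext i; unfold PtL; rw [hm]
  have hsum : ∑ i : Fin (d+1), (PtL d (Fin.cons (0:ℝ) vt) (PBL d x)) i * (Fin.cons (0:ℝ) vt : Fin (d+1) → ℝ) i
      = (1 - t^2)/(2*t) := by
    rw [hw, Fin.sum_univ_succ]
    simp only [Fin.cons_zero, Fin.cons_succ, lorOrigin, Fin.succ_ne_zero, if_neg,
      ite_true, ite_false, reduceCtorEq, not_false_eq_true, mul_zero, zero_add,
      mul_one, add_zero, zero_mul, if_pos]
    rw [show ∑ i : Fin d, -(1/(2*m)) * ((1-m^2) * vt i) * vt i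
        = (-(1/(2*m)) * (1-m^2)) * nsq d vt by
      rw [← sum_mul_self d (-(1/(2*m)) * (1-m^2)) vt]
      exact Finset.sum_congr rfl fun i _ => by ring]
    rw [hv, mul_one, hmt]
    have ht0 : t ≠ 0 := ne_of_gt htpos
    field_simp
  have hw0 : (PtL d (Fin.cons (0:ℝ) vt) (PBL d x)) 0 = (1 + t^2)/(2*t) := by
    rw [hw]
    simp only [lorOrigin, if_pos, ite_true, Fin.cons_zero, mul_zero, add_zero, mul_one]
    rw [hmt]
    have ht0 : t ≠ 0 := ne_of_gt htpos
    field_simp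
  have hmink : mink d (PtL d (Fin.cons (0:ℝ) vt) (PBL d x)) (lorOrigin d)
      = -((1 + t^2)/(2*t)) := by
    unfold mink
    rw [show ∑ i : Fin d, (PtL d (Fin.cons (0:ℝ) vt) (PBL d x)) i.succ * lorOrigin d i.succ = 0 by
      refine Finset.sum_eq_zero fun i _ => ?_
      simp [lorOrigin, Fin.succ_ne_zero]]
    rw [hw0]
    simp [lorOrigin]
  have hdL : dL d (PtL d (Fin.cons (0:ℝ) vt) (PBL d x)) (lorOrigin d)
      = arcosh ((1 + t^2)/(2*t)) := by
    unfold dL; rw [hmink, neg_neg]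
  unfold tL
  rw [hsum, hdL, L1 htpos, ← Real.log_inv, htdef, inv_div]

lemma measurable_nsq (d : ℕ) : Measurable (nsq d) := by
  unfold nsq
  exact Finset.measurable_sum _ fun i _ => (measurable_pi_apply i).pow_const 2

lemma measurable_PBL (d : ℕ) : Measurable (PBL d) := by
  rw [measurable_pi_iff]
  intro i
  refine Fin.cases ?_ (fun j => ?_) i
  · simp only [PBL, Fin.cons_zero]
    exact (measurable_const.add (measurable_nsq d)).div
      (measurable_const.sub (measurable_nsq d))
  · simp only [PBL, Fin.cons_succ]
    exact (measurable_const.mul (measurable_pi_apply j)).div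
      (measurable_const.sub (measurable_nsq d))

lemma measurable_realSign : Measurable Real.sign := by
  unfold Real.sign
  exact Measurable.ite (measurableSet_lt measurable_id measurable_const) measurable_const
    (Measurable.ite (measurableSet_lt measurable_const measurable_id)
      measurable_const measurable_const)

lemma measurable_arcosh : Measurable arcosh := by
  unfold arcosh
  exact Real.measurable_log.comp
    (measurable_id.add ((measurable_id.pow_const 2).sub measurable_const).sqrt)

lemma measurable_mink_left (d : ℕ) (y : Fin (d+1) → ℝ) :
    Measurable fun x => mink d x y := by
  unfold mink
  exact (((measurable_pi_apply 0).mul measurable_const).neg).add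
    (Finset.measurable_sum _ fun i _ => (measurable_pi_apply i.succ).mul measurable_const)

lemma measurable_tLPtL (d : ℕ) (v : Fin (d+1) → ℝ) :
    Measurable fun y => tL d v (PtL d v y) := by
  have hm : Measurable fun y : Fin (d+1) → ℝ =>
      mink d y (fun j => lorOrigin d j + v j) := measurable_mink_left d _
  have hPtL : Measurable (PtL d v) := by
    rw [measurable_pi_iff]; intro i
    unfold PtL
    exact ((measurable_const.div (measurable_const.mul hm)).neg).mul
      (((measurable_const.add (hm.pow_const 2)).mul measurable_const).add
       ((measurable_const.sub (hm.pow_const 2)).mul measurable_const))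
  have htL : Measurable (tL d v) := by
    unfold tL dL
    exact (measurable_realSign.comp
        (Finset.measurable_sum _ fun i _ => (measurable_pi_apply i).mul measurable_const)).mul
      (measurable_arcosh.comp (measurable_mink_left d _).neg)
  exact htL.comp hPtL

/-- the Poincaré-ball and Lorentz-model formulations of the
horospherical hyperbolic sliced-Wasserstein discrepancy agree. -/
theorem HHSW_poincare_eq_lorentz (d : ℕ) (p : ℝ) (hp : 1 ≤ p)
    (lam : MeasureTheory.Measure (IdealPoints d))
    [MeasureTheory.IsProbabilityMeasure lam]
    (μ ν : MeasureTheory.Measure (Fin d → ℝ))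
    [MeasureTheory.IsProbabilityMeasure μ] [MeasureTheory.IsProbabilityMeasure ν]
    (hμsupp : μ (BallSet d) = 1) (hνsupp : ν (BallSet d) = 1)
    (hμmom : ∫⁻ x, ENNReal.ofReal (dB d x 0 ^ p) ∂μ < ⊤)
    (hνmom : ∫⁻ x, ENNReal.ofReal (dB d x 0 ^ p) ∂ν < ⊤) :
    ∫⁻ vt : IdealPoints d,
        Wp p (μ.map (fun x => tB d vt.1 (PtB d vt.1 x)))
             (ν.map (fun x => tB d vt.1 (PtB d vt.1 x))) ∂lam =
    ∫⁻ vt : IdealPoints d,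
        Wp p (((μ.map (PBL d)).map (fun y => tL d (Fin.cons 0 vt.1) (PtL d (Fin.cons 0 vt.1) y))))
             (((ν.map (PBL d)).map (fun y => tL d (Fin.cons 0 vt.1) (PtL d (Fin.cons 0 vt.1) y)))) ∂lam := by
  have hball : MeasurableSet (BallSet d) :=
    measurableSet_lt (measurable_nsq d) measurable_const
  have key : ∀ (v : Fin d → ℝ), nsq d v = 1 →
      ∀ (κ : MeasureTheory.Measure (Fin d → ℝ)) [MeasureTheory.IsProbabilityMeasure κ],
      κ (BallSet d) = 1 →
      κ.map (fun x => tB d v (PtB d v x)) =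
        (κ.map (PBL d)).map
          (fun y => tL d (Fin.cons 0 v) (PtL d (Fin.cons 0 v) y)) := by
    intro v hv κ _ hκ
    rw [Measure.map_map (measurable_tLPtL d _) (measurable_PBL d)]
    refine Measure.map_congr ?_
    have hκc : κ (BallSet d)ᶜ = 0 := by
      rw [measure_compl hball (by rw [hκ]; exact ENNReal.one_ne_top), measure_univ, hκ,
        tsub_self]
    have hae : ∀ᵐ x ∂κ, x ∈ BallSet d := by
      rw [ae_iff]; exact hκc
    filter_upwards [hae] with x hx
    show tB d v (PtB d v x) =
      ((fun y => tL d (Fin.cons 0 v) (PtL d (Fin.cons 0 v) y)) ∘ PBL d) x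
    simp only [Function.comp_apply]
    rw [ball_side d v hv x hx, lorentz_side d v hv x hx]
  refine lintegral_congr fun vt => ?_
  rw [key vt.1 vt.2 μ hμsupp, key vt.1 vt.2 ν hνsupp]
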